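/- arXiv:1710.03998 — 3 statements merged into one kernel-verified Lean document; each statement's English description precedes it below -/
import Mathlib

section
/- With A(z) = d X_{2N+2}(z) ⋯ X_1(z) as in the (m,n) = (2N+2, 2) case of the q-KP Lax matrix, A(z) is a matrix polynomial of degree N+1 in z, its leading coefficient A_{N+1} is lower triangular with diagonal entries t_1 ∏_{i=1}^{N+1} r_{2i−1}^{−1} and t_2 ∏_{i=1}^{N+1} r_{2i}^{−1}, and its constant term A_0 is upper triangular with diagonal entries θ_1 = t_1 ∏_{i=1}^{2N+2} x_{i,1} and θ_2 = t_2 ∏_{i=1}^{2N+2} x_{i,2}. -/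
/-!
Write `X_i(z) = L_i + z U_i` with `L_i = [[x_{i,1}, 1], [0, x_{i,2}]]` upper triangular and
`U_i = [[0, 0], [r_i⁻¹, 0]]`. Since `U_{i+1} U_i = 0`, each pair `X_{2k+2}(z) X_{2k+1}(z)` is
linear in `z`, with a lower triangular `z`-coefficient whose diagonal is
`(r_{2k+1}⁻¹, r_{2k+2}⁻¹)`. So `A(z)` is `d` times a product of `N + 1` linear factors: its degree
is at most `N + 1`, its top coefficient is `d` times the product of those lower triangular
matrices, and its constant term is `d L_{2N+2} ⋯ L_1`. Diagonals of products of triangular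
matrices multiply entrywise.
-/

open Matrix Polynomial

namespace Matrix

variable {m α R : Type*} [LinearOrder α] {b : m → α}

theorem BlockTriangular.mul_apply_self [Fintype m] [NonUnitalNonAssocSemiring R]
    {M N : Matrix m m R} (hM : M.BlockTriangular b) (hN : N.BlockTriangular b)
    (hb : Function.Injective b) (i : m) : (M * N) i i = M i i * N i i := by
  rw [mul_apply, Finset.sum_eq_single i]
  · intro k _ hki
    rcases lt_or_gt_of_ne (hb.ne hki) with h | h
    · rw [hM h, zero_mul]
    · rw [hN h, mul_zero]
  · simp

theorem BlockTriangular.list_prod [Fintype m] [DecidableEq m] [Semiring R]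
    {l : List (Matrix m m R)} (hl : ∀ M ∈ l, M.BlockTriangular b) : l.prod.BlockTriangular b :=
  Subsemiring.list_prod_mem (s := blockTriangularSubsemiring R b) hl

theorem isUpperTriangular_fin_two_iff [Zero R] {M : Matrix (Fin 2) (Fin 2) R} :
    M.IsUpperTriangular ↔ M 1 0 = 0 := by
  refine ⟨fun h => h (by decide), fun h i j hij => ?_⟩
  fin_cases i <;> fin_cases j <;> simp_all

theorem isLowerTriangular_fin_two_iff [Zero R] {M : Matrix (Fin 2) (Fin 2) R} :
    M.IsLowerTriangular ↔ M 0 1 = 0 := by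
  refine ⟨fun h => h (by decide), fun h i j hij => ?_⟩
  fin_cases i <;> fin_cases j <;> first | exact h | exact absurd hij (by decide)

theorem BlockTriangular.list_prod_apply_self [Fintype m] [DecidableEq m] [Semiring R]
    {l : List (Matrix m m R)} (hl : ∀ M ∈ l, M.BlockTriangular b) (hb : Function.Injective b)
    (i : m) : l.prod i i = (l.map fun M => M i i).prod := by
  induction l with
  | nil => simp
  | cons M l ih =>
    rw [List.forall_mem_cons] at hl
    rw [List.prod_cons, hl.1.mul_apply_self (list_prod hl.2) hb, ih hl.2, List.map_cons,
      List.prod_cons]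

theorem BlockTriangular.prod_reverse_ofFn_apply_self [Fintype m] [DecidableEq m] [CommSemiring R]
    {n : ℕ} {M : Fin n → Matrix m m R} (hM : ∀ k, (M k).BlockTriangular b)
    (hb : Function.Injective b) (i : m) : (List.ofFn M).reverse.prod i i = ∏ k, M k i i := by
  rw [list_prod_apply_self (by simpa using hM) hb, List.map_reverse, List.prod_reverse,
    List.map_ofFn, List.prod_ofFn]
  rfl

end Matrix

namespace Polynomial

variable {R : Type*} [Semiring R]

theorem natDegree_list_prod_le_of_forall_le {l : List R[X]} {n : ℕ}
    (hl : ∀ p ∈ l, p.natDegree ≤ n) : l.prod.natDegree ≤ l.length * n :=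
  (natDegree_list_prod_le l).trans <| by
    simpa using List.sum_le_card_nsmul (l.map natDegree) n (by simpa using hl)

theorem natDegree_C_add_X_mul_C_le (a u : R) : (C a + X * C u).natDegree ≤ 1 :=
  (natDegree_add_le _ _).trans <| max_le (by simp) <|
    natDegree_mul_le.trans (by simpa using natDegree_X_le)

theorem C_add_X_mul_C_mul_C_add_X_mul_C {a b u v : R} (h : u * v = 0) :
    (C a + X * C u) * (C b + X * C v) = C (a * b) + X * C (u * b + a * v) := by
  have hX : ∀ p : R[X], p * X = X * p := fun p => (commute_X p).symm.eq
  simp only [mul_add, add_mul, map_add, map_mul, ← mul_assoc, hX]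
  simp only [mul_assoc, ← map_mul, h, map_zero, mul_zero, add_zero]
  abel

section LinearFactors

variable {m : ℕ} (a u : Fin m → R)

theorem natDegree_le_one_of_mem_ofFn_C_add_X_mul_C {p : R[X]}
    (hp : p ∈ (List.ofFn fun k => C (a k) + X * C (u k)).reverse) : p.natDegree ≤ 1 := by
  obtain ⟨k, rfl⟩ := List.mem_ofFn.1 (List.mem_reverse.1 hp)
  exact natDegree_C_add_X_mul_C_le _ _

theorem natDegree_prod_reverse_ofFn_C_add_X_mul_C_le :
    ((List.ofFn fun k => C (a k) + X * C (u k)).reverse.prod).natDegree ≤ m := by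
  simpa using natDegree_list_prod_le_of_forall_le
    fun _ => natDegree_le_one_of_mem_ofFn_C_add_X_mul_C a u

theorem coeff_prod_reverse_ofFn_C_add_X_mul_C :
    ((List.ofFn fun k => C (a k) + X * C (u k)).reverse.prod).coeff m =
      (List.ofFn u).reverse.prod := by
  simpa [List.map_reverse, Function.comp_def] using coeff_list_prod_of_natDegree_le _ 1
    fun _ => natDegree_le_one_of_mem_ofFn_C_add_X_mul_C a u

end LinearFactors

end Polynomial

theorem natDegree_apply_le_natDegree_matPolyEquiv {R n : Type*} [CommSemiring R] [Fintype n]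
    [DecidableEq n] (M : Matrix n n R[X]) (i j : n) :
    (M i j).natDegree ≤ (matPolyEquiv M).natDegree :=
  natDegree_le_iff_coeff_eq_zero.2 fun k hk => by
    rw [← matPolyEquiv_coeff_apply, coeff_eq_zero_of_natDegree_lt hk, Matrix.zero_apply]

theorem List.prod_reverse_ofFn_two_mul {M : Type*} [Monoid M] {n : ℕ} (f : Fin (2 * n) → M) :
    (List.ofFn f).reverse.prod =
      (List.ofFn fun k : Fin n =>
        f ⟨2 * k + 1, by omega⟩ * f ⟨2 * k, by omega⟩).reverse.prod := by
  induction n with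
  | zero => simp
  | succ n ih =>
    rw [List.ofFn_succ' (n := 2 * n + 1), List.ofFn_succ' (n := 2 * n), List.ofFn_succ']
    simp only [List.concat_eq_append, List.reverse_append, List.reverse_cons, List.reverse_nil,
      List.nil_append, List.prod_append, List.prod_cons, List.prod_nil, mul_one, mul_assoc, ih]
    rfl

section Lax

variable {K : Type*} [CommRing K]

/-- `X_i(z)`, with `v = (x_{i,1}, x_{i,2})` and `c = r_i⁻¹`. -/
noncomputable def laxFactor (v : Fin 2 → K) (c : K) : Matrix (Fin 2) (Fin 2) K[X] :=
  !![C (v 0), 1; C c * X, C (v 1)]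

theorem matPolyEquiv_laxFactor (v : Fin 2 → K) (c : K) :
    matPolyEquiv (laxFactor v c) = C !![v 0, 1; 0, v 1] + X * C !![0, 0; c, 0] := by
  ext k i j
  rw [matPolyEquiv_coeff_apply]
  rcases k with _ | _ | k <;> fin_cases i <;> fin_cases j <;>
    simp [laxFactor, coeff_X, coeff_C, coeff_one]

theorem matPolyEquiv_laxFactor_mul_laxFactor (v₁ v₂ : Fin 2 → K) (c₁ c₂ : K) :
    matPolyEquiv (laxFactor v₂ c₂ * laxFactor v₁ c₁) =
      C (!![v₂ 0, 1; 0, v₂ 1] * !![v₁ 0, 1; 0, v₁ 1]) +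
        X * C !![c₁, 0; c₂ * v₁ 0 + v₂ 1 * c₁, c₂] := by
  rw [map_mul, matPolyEquiv_laxFactor, matPolyEquiv_laxFactor,
    C_add_X_mul_C_mul_C_add_X_mul_C (by ext i j; fin_cases i <;> fin_cases j <;> simp)]
  congr 3
  simp

noncomputable def laxProduct {n : ℕ} (x : Fin n → Fin 2 → K) (c : Fin n → K) :
    Matrix (Fin 2) (Fin 2) K[X] :=
  (List.ofFn fun i => laxFactor (x i) (c i)).reverse.prod

section ConstantCoeff

variable {n : ℕ} (x : Fin n → Fin 2 → K) (c : Fin n → K)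

theorem coeff_zero_matPolyEquiv_laxProduct :
    (matPolyEquiv (laxProduct x c)).coeff 0 =
      (List.ofFn fun i => !![x i 0, 1; 0, x i 1]).reverse.prod := by
  rw [← constantCoeff_apply, laxProduct, map_list_prod, map_list_prod, List.map_map,
    List.map_reverse, List.map_ofFn]
  congr 3; funext i
  simp [matPolyEquiv_laxFactor]

theorem coeff_zero_matPolyEquiv_laxProduct_isUpperTriangular :
    ((matPolyEquiv (laxProduct x c)).coeff 0).IsUpperTriangular := by
  rw [coeff_zero_matPolyEquiv_laxProduct]
  exact BlockTriangular.list_prod (by simp [isUpperTriangular_fin_two_iff])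

theorem coeff_zero_matPolyEquiv_laxProduct_apply_self (i : Fin 2) :
    (matPolyEquiv (laxProduct x c)).coeff 0 i i = ∏ k, x k i := by
  rw [coeff_zero_matPolyEquiv_laxProduct, BlockTriangular.prod_reverse_ofFn_apply_self
    (fun _ => isUpperTriangular_fin_two_iff.2 rfl) Function.injective_id]
  fin_cases i <;> rfl

end ConstantCoeff

section LeadingCoeff

variable {m : ℕ} (x : Fin (2 * m) → Fin 2 → K) (c : Fin (2 * m) → K)

/-- The `z`-coefficient of `X_{2k+2}(z) X_{2k+1}(z)`, whose 0-based indices are `2k+1` and `2k`. -/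
def laxPairSlope (x : Fin (2 * m) → Fin 2 → K) (c : Fin (2 * m) → K) (k : Fin m) :
    Matrix (Fin 2) (Fin 2) K :=
  let i : Fin (2 * m) := ⟨2 * k, by omega⟩
  let j : Fin (2 * m) := ⟨2 * k + 1, by omega⟩
  !![c i, 0; c j * x i 0 + x j 1 * c i, c j]

theorem exists_matPolyEquiv_laxProduct_eq :
    ∃ L : Fin m → Matrix (Fin 2) (Fin 2) K, matPolyEquiv (laxProduct x c) =
      (List.ofFn fun k => C (L k) + X * C (laxPairSlope x c k)).reverse.prod := by
  rw [laxProduct, List.prod_reverse_ofFn_two_mul, map_list_prod, List.map_reverse, List.map_ofFn]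
  exact ⟨_, by congr 3; funext; exact matPolyEquiv_laxFactor_mul_laxFactor ..⟩

theorem natDegree_matPolyEquiv_laxProduct_le : (matPolyEquiv (laxProduct x c)).natDegree ≤ m := by
  obtain ⟨L, hL⟩ := exists_matPolyEquiv_laxProduct_eq x c
  exact hL ▸ natDegree_prod_reverse_ofFn_C_add_X_mul_C_le L _

theorem coeff_matPolyEquiv_laxProduct :
    (matPolyEquiv (laxProduct x c)).coeff m = (List.ofFn (laxPairSlope x c)).reverse.prod := by
  obtain ⟨L, hL⟩ := exists_matPolyEquiv_laxProduct_eq x c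
  rw [hL, coeff_prod_reverse_ofFn_C_add_X_mul_C]

theorem coeff_matPolyEquiv_laxProduct_isLowerTriangular :
    ((matPolyEquiv (laxProduct x c)).coeff m).IsLowerTriangular := by
  rw [coeff_matPolyEquiv_laxProduct]
  exact BlockTriangular.list_prod (by simp [isLowerTriangular_fin_two_iff, laxPairSlope])

theorem coeff_matPolyEquiv_laxProduct_apply_self (i : Fin 2) :
    (matPolyEquiv (laxProduct x c)).coeff m i i = ∏ k, laxPairSlope x c k i i :=
  coeff_matPolyEquiv_laxProduct x c ▸ BlockTriangular.prod_reverse_ofFn_apply_self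
    (fun _ => isLowerTriangular_fin_two_iff.2 rfl) OrderDual.toDual.injective i

end LeadingCoeff

end Lax

/-- In the `(m,n) = (2N+2, 2)` case of the q-KP Lax matrix,
`A(z) = d X_{2N+2}(z) ⋯ X_1(z)` is a matrix polynomial of degree `N+1`, its
leading coefficient is lower triangular with diagonal entries
`t₁ ∏ r_{2i−1}⁻¹` and `t₂ ∏ r_{2i}⁻¹`, and its constant term is upper
triangular with diagonal entries `θ₁ = t₁ ∏ x_{i,1}` and `θ₂ = t₂ ∏ x_{i,2}`. -/
theorem stmt_2 {K : Type*} [Field K] (N : ℕ)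
    (x : Fin (2 * N + 2) → Fin 2 → K) (r : Fin (2 * N + 2) → K)
    (t₁ t₂ : K)
    (X : Fin (2 * N + 2) → Matrix (Fin 2) (Fin 2) (Polynomial K))
    (hX : ∀ i, X i = !![C (x i 0), 1; C (r i)⁻¹ * Polynomial.X, C (x i 1)])
    (d : Matrix (Fin 2) (Fin 2) (Polynomial K))
    (hd : d = Matrix.diagonal ![C t₁, C t₂])
    (A : Matrix (Fin 2) (Fin 2) (Polynomial K))
    (hA : A = d * ((List.ofFn X).reverse).prod) :
    (∀ a b : Fin 2, (A a b).natDegree ≤ N + 1) ∧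
    (A 0 1).coeff (N + 1) = 0 ∧
    (A 0 0).coeff (N + 1) = t₁ * ∏ i : Fin (N + 1), (r ⟨2 * i.val, by omega⟩)⁻¹ ∧
    (A 1 1).coeff (N + 1) = t₂ * ∏ i : Fin (N + 1), (r ⟨2 * i.val + 1, by omega⟩)⁻¹ ∧
    (A 1 0).coeff 0 = 0 ∧
    (A 0 0).coeff 0 = t₁ * ∏ i, x i 0 ∧
    (A 1 1).coeff 0 = t₂ * ∏ i, x i 1 := by
  have hprod :
      (List.ofFn X).reverse.prod = laxProduct (n := 2 * (N + 1)) x fun i => (r i)⁻¹ := by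
    rw [funext hX]; rfl
  have hAP : ∀ i j, A i j = C (![t₁, t₂] i) * laxProduct x (fun i => (r i)⁻¹) i j := by
    intro i j
    rw [hA, hd, hprod, diagonal_mul]
    fin_cases i <;> rfl
  have hcoeff : ∀ i j n,
      (A i j).coeff n =
        ![t₁, t₂] i * (matPolyEquiv (laxProduct x fun i => (r i)⁻¹)).coeff n i j := by
    intro i j n
    rw [hAP, coeff_C_mul, matPolyEquiv_coeff_apply]
  refine ⟨fun i j => ?_, ?_, ?_, ?_, ?_, ?_, ?_⟩
  · rw [hAP]
    exact (natDegree_C_mul_le _ _).trans <|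
      (natDegree_apply_le_natDegree_matPolyEquiv _ i j).trans <|
        natDegree_matPolyEquiv_laxProduct_le (m := N + 1) x _
  · rw [hcoeff, isLowerTriangular_fin_two_iff.1
      (coeff_matPolyEquiv_laxProduct_isLowerTriangular (m := N + 1) x _), mul_zero]
  · rw [hcoeff, coeff_matPolyEquiv_laxProduct_apply_self (m := N + 1)]; rfl
  · rw [hcoeff, coeff_matPolyEquiv_laxProduct_apply_self (m := N + 1)]; rfl
  · rw [hcoeff, isUpperTriangular_fin_two_iff.1
      (coeff_zero_matPolyEquiv_laxProduct_isUpperTriangular x _), mul_zero]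
  · rw [hcoeff, coeff_zero_matPolyEquiv_laxProduct_apply_self]; rfl
  · rw [hcoeff, coeff_zero_matPolyEquiv_laxProduct_apply_self]; rfl
end

section
/- Suppose functions y, ȳ : K → K and functions F, G, H, det A : K → K satisfy, for all z, the two relations L_2: F(z) ȳ(z) − H(z) y(qz) + G(z) y(z) = 0 and L_3: F̄(z) |B(z)| y(qz) − H(qz) |A(z)| ȳ(z) + G(z) ȳ(qz) = 0. If z_0 is a point with G(z_0) = 0, y(q z_0) ≠ 0, and ȳ(z_0) ≠ 0, then |B(z_0)| F(z_0) F̄(z_0) = H(z_0) H(q z_0) |A(z_0)|. -/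
/-- Second compatibility relation of Lemma 2.2: eliminating `y(qz₀)` and
`ȳ(z₀)` from `L₂(z₀) = 0` and `L₃(z₀) = 0` at a point `z₀` with `G(z₀) = 0`
gives `|B(z₀)| F(z₀) F̄(z₀) = H(z₀) H(qz₀) |A(z₀)|`. -/
theorem stmt_5 {K : Type*} [Field K] (q : K) (hq : q ≠ 0)
    (y ybar F Fbar G H detA detB : K → K) (z₀ : K)
    (hL2 : F z₀ * ybar z₀ - H z₀ * y (q * z₀) + G z₀ * y z₀ = 0)
    (hL3 : Fbar z₀ * detB z₀ * y (q * z₀)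
        - H (q * z₀) * detA z₀ * ybar z₀ + G z₀ * ybar (q * z₀) = 0)
    (hG : G z₀ = 0) (hy : y (q * z₀) ≠ 0) (hyb : ybar z₀ ≠ 0) :
    detB z₀ * F z₀ * Fbar z₀ = H z₀ * H (q * z₀) * detA z₀ := by
  rw [hG, zero_mul, add_zero, sub_eq_zero] at hL2 hL3
  have : (detB z₀ * F z₀ * Fbar z₀) * (y (q*z₀) * ybar z₀)
      = (H z₀ * H (q*z₀) * detA z₀) * (y (q*z₀) * ybar z₀) := by
    linear_combination (Fbar z₀ * detB z₀ * y (q*z₀)) * hL2 + (H z₀ * y (q*z₀)) * hL3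
  exact mul_right_cancel₀ (mul_ne_zero hy hyb) this
end

section
/- Suppose for all z the two relations hold: L_2(z): F(z) ȳ(z) − A(z) y(qz) + G(z) y(z) = 0 and L_3(z): (z/q) F̄(z/q) y(z) + G(z/q) ȳ(z) − q c_1 c_2 B(z/q) ȳ(z/q) = 0, where F, F̄, G, A, B : K → K and c_1, c_2, q ∈ K with q ≠ 0. Then whenever G(z/q) ≠ 0, y satisfies the three-term relation A(z) F(z/q) y(qz) + q c_1 c_2 B(z/q) F(z) y(z/q) − { F(z/q) G(z) + F(z) V(z/q)/G(z/q) } y(z) = 0, where V(w) := q c_1 c_2 A(w) B(w) − w F(w) F̄(w). -/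
/-! Multiply `L₃(z)` by `F(z) F(z/q)` and substitute `F(z) ȳ(z)` and `F(z/q) ȳ(z/q)` from
`L₂(z)` and `L₂(z/q)`; after clearing the denominator `G(z/q)` what remains is `L₁(z)`. -/

/-- The `L₁` equation (3.12) for the direction `T₃ = T_{c₁} T_{d₁}` of the
q-Garnier system, obtained by eliminating `ȳ(z)` and `ȳ(z/q)` from
`L₂(z) = L₂(z/q) = L₃(z) = 0`. -/
theorem stmt_13 {K : Type*} [Field K] (q c₁ c₂ : K) (hq : q ≠ 0)
    (y ybar F Fbar G A B V : K → K)
    (hL2 : ∀ z, F z * ybar z - A z * y (q * z) + G z * y z = 0)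
    (hL3 : ∀ z, (z / q) * Fbar (z / q) * y z + G (z / q) * ybar z
        - q * c₁ * c₂ * B (z / q) * ybar (z / q) = 0)
    (hV : ∀ w, V w = q * c₁ * c₂ * A w * B w - w * F w * Fbar w) :
    ∀ z, G (z / q) ≠ 0 →
      A z * F (z / q) * y (q * z) + q * c₁ * c₂ * B (z / q) * F z * y (z / q)
        - (F (z / q) * G z + F z * V (z / q) / G (z / q)) * y z = 0 := by
  intro z hG
  have hL2_prev : F (z / q) * ybar (z / q) - A (z / q) * y z + G (z / q) * y (z / q) = 0 := by
    simpa only [mul_div_cancel₀ z hq] using hL2 (z / q)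
  rw [add_div' _ _ _ hG, div_mul_eq_mul_div, sub_div' hG, div_eq_zero_iff, hV]
  left
  linear_combination -(F (z / q) * G (z / q)) * hL2 z + F z * F (z / q) * hL3 z
    + q * c₁ * c₂ * B (z / q) * F z * hL2_prev
end
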